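/- arXiv:2104.06102 — 8 statements merged into one kernel-verified Lean document; each statement's English description precedes it below -/
import Mathlib

section
/- Let d ≥ 1, let λ̃ > 0, M > 0, λ < 0 with λ̃ + λ < 0, b ∈ ℝ and z ∈ ℝ^d. Let w : [0,∞) → ℝ^d be continuous with ‖w(t)‖₂ ≤ M e^{−λ̃ t} ‖w(0)‖₂ for all t ≥ 0. If x : [0,∞) → ℝ is differentiable and satisfies x'(t) = λ x(t) + b ⟨z, w(t)⟩ for all t ≥ 0, then for all t ≥ 0: |x(t)| ≤ e^{−λ̃ t} ( |x(0)| + ‖z‖₂ ‖w(0)‖₂ M |b| / |λ̃ + λ| ). -/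
/-!
For `x' = λ x + u`, the integrating factor gives `y t = exp (-λ t) • x t` the derivative
`exp (-λ t) • u t`, whose norm is at most `K exp (c t)` with `c = -(λ̃ + λ) > 0`.
The fencing theorem for the norm of a right derivative then bounds `‖y t‖` by
`‖x 0‖ + K (exp (c t) - 1) / c`, and multiplying back by `exp (λ t) ≤ exp (-λ̃ t)` gives
the claim. The forcing `b ⟪z, w t⟫` has `K = ‖z‖ ‖w 0‖ M |b|` by Cauchy–Schwarz.
-/

open Real

section LinearODE

variable {E : Type*} [NormedAddCommGroup E] [NormedSpace ℝ E]

theorem hasDerivAt_exp_neg_mul_smul {lam t : ℝ} {x : ℝ → E} {v : E}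
    (hx : HasDerivAt x (lam • x t + v) t) :
    HasDerivAt (fun s => exp (-lam * s) • x s) (exp (-lam * t) • v) t := by
  have hexp : HasDerivAt (fun s => exp (-lam * s)) (exp (-lam * t) * -lam) t := by
    simpa using ((hasDerivAt_id t).const_mul (-lam)).exp
  refine (hexp.smul hx).congr_deriv ?_
  rw [smul_add, mul_smul, neg_smul, smul_neg]
  abel

theorem norm_exp_neg_mul_smul_le {lam c K : ℝ} (hc : 0 < c) {x u : ℝ → E}
    (hx : ∀ t ≥ 0, HasDerivAt x (lam • x t + u t) t)
    (hu : ∀ t ≥ 0, ‖exp (-lam * t) • u t‖ ≤ K * exp (c * t)) {t : ℝ} (ht : 0 ≤ t) :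
    ‖exp (-lam * t) • x t‖ ≤ ‖x 0‖ + K * (exp (c * t) - 1) / c := by
  have hy : ∀ s ≥ 0, HasDerivAt (fun s => exp (-lam * s) • x s) (exp (-lam * s) • u s) s :=
    fun s hs => hasDerivAt_exp_neg_mul_smul (hx s hs)
  have hB : ∀ s,
      HasDerivAt (fun s => ‖x 0‖ + K * (exp (c * s) - 1) / c) (K * exp (c * s)) s := by
    intro s
    have hexp := ((hasDerivAt_id' s).const_mul c).exp
    refine ((((hexp.sub_const 1).const_mul K).div_const c).const_add _).congr_deriv ?_
    field_simp
  refine image_norm_le_of_norm_deriv_right_le_deriv_boundary (a := 0) (b := t)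
    (fun s hs => (hy s hs.1).continuousAt.continuousWithinAt)
    (fun s hs => (hy s hs.1).hasDerivWithinAt) (by simp) hB (fun s hs => hu s hs.1)
    ⟨ht, le_rfl⟩

theorem norm_le_of_hasDerivAt_smul_add {lam mu K : ℝ} (hsum : mu + lam < 0) (hK : 0 ≤ K)
    {x u : ℝ → E} (hx : ∀ t ≥ 0, HasDerivAt x (lam • x t + u t) t)
    (hu : ∀ t ≥ 0, ‖u t‖ ≤ K * exp (-mu * t)) :
    ∀ t ≥ 0, ‖x t‖ ≤ exp (-mu * t) * (‖x 0‖ + K / |mu + lam|) := by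
  intro t ht
  obtain ⟨c, hc_def⟩ : ∃ c, c = -(mu + lam) := ⟨_, rfl⟩
  have hc : 0 < c := by linarith
  have hfactor : ∀ s ≥ 0, ‖exp (-lam * s) • u s‖ ≤ K * exp (c * s) := by
    intro s hs
    rw [norm_smul, norm_of_nonneg (exp_pos _).le]
    calc exp (-lam * s) * ‖u s‖ ≤ exp (-lam * s) * (K * exp (-mu * s)) := by
          gcongr; exact hu s hs
      _ = K * exp (c * s) := by rw [mul_left_comm, ← exp_add, hc_def]; ring_nf
  have hy := norm_exp_neg_mul_smul_le hc hx hfactor ht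
  rw [norm_smul, norm_of_nonneg (exp_pos _).le] at hy
  have hdecay : exp (lam * t) ≤ exp (-mu * t) := by gcongr; linarith
  have hshift : exp (lam * t) * exp (c * t) = exp (-mu * t) := by
    rw [← exp_add, hc_def]; ring_nf
  rw [abs_of_neg hsum, ← hc_def]
  calc ‖x t‖ = exp (lam * t) * (exp (-lam * t) * ‖x t‖) := by
        rw [← mul_assoc, ← exp_add]; simp
    _ ≤ exp (lam * t) * (‖x 0‖ + K * (exp (c * t) - 1) / c) := by gcongr
    _ = exp (lam * t) * ‖x 0‖ + K / c * (exp (-mu * t) - exp (lam * t)) := by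
        rw [← hshift]; ring
    _ ≤ exp (-mu * t) * (‖x 0‖ + K / c) := by
        have : 0 ≤ K / c := by positivity
        nlinarith [norm_nonneg (x 0), exp_pos (lam * t)]

end LinearODE

theorem stmt_0_general (d : ℕ) (lamT M lam : ℝ) (hM : 0 < M)
    (hsum : lamT + lam < 0) (b : ℝ) (z : EuclideanSpace ℝ (Fin d))
    (w : ℝ → EuclideanSpace ℝ (Fin d))
    (hw : ∀ t ≥ (0 : ℝ), ‖w t‖ ≤ M * Real.exp (-lamT * t) * ‖w 0‖)
    (x : ℝ → ℝ)
    (hx : ∀ t ≥ (0 : ℝ), HasDerivAt x (lam * x t + b * (inner ℝ z (w t) : ℝ)) t) :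
    ∀ t ≥ (0 : ℝ), |x t| ≤
      Real.exp (-lamT * t) * (|x 0| + ‖z‖ * ‖w 0‖ * M * |b| / |lamT + lam|) := by
  have hforcing : ∀ t ≥ (0 : ℝ),
      ‖b * inner ℝ z (w t)‖ ≤ ‖z‖ * ‖w 0‖ * M * |b| * exp (-lamT * t) := by
    intro t ht
    calc ‖b * inner ℝ z (w t)‖ ≤ |b| * (‖z‖ * ‖w t‖) := by
          rw [norm_mul, norm_eq_abs]; gcongr; exact norm_inner_le_norm z (w t)
      _ ≤ |b| * (‖z‖ * (M * exp (-lamT * t) * ‖w 0‖)) := by gcongr; exact hw t ht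
      _ = ‖z‖ * ‖w 0‖ * M * |b| * exp (-lamT * t) := by ring
  simpa only [norm_eq_abs] using
    norm_le_of_hasDerivAt_smul_add hsum (by positivity) hx hforcing

/-- Componentwise estimate in the proof of the Proposition of Section 3:
a scalar linear ODE whose forcing term is an inner product with an
exponentially decaying vector-valued signal. -/
theorem stmt_0 (d : ℕ) (hd : 1 ≤ d) (lamT M lam : ℝ) (hlamT : 0 < lamT) (hM : 0 < M)
    (hlam : lam < 0) (hsum : lamT + lam < 0) (b : ℝ) (z : EuclideanSpace ℝ (Fin d))
    (w : ℝ → EuclideanSpace ℝ (Fin d)) (hw_cont : ContinuousOn w (Set.Ici 0))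
    (hw : ∀ t ≥ (0 : ℝ), ‖w t‖ ≤ M * Real.exp (-lamT * t) * ‖w 0‖)
    (x : ℝ → ℝ)
    (hx : ∀ t ≥ (0 : ℝ), HasDerivAt x (lam * x t + b * (inner ℝ z (w t) : ℝ)) t) :
    ∀ t ≥ (0 : ℝ), |x t| ≤
      Real.exp (-lamT * t) * (|x 0| + ‖z‖ * ‖w 0‖ * M * |b| / |lamT + lam|) :=
  stmt_0_general d lamT M lam hM hsum b z w hw x hx
end

section
/- Let j < n be positive integers, λ̃ > 0, M > 0, and for each k with j+1 ≤ k ≤ n let λ_k < 0 satisfy λ̃ + λ_k < 0 and let b_k ∈ ℝ. Let z_x, z_e ∈ ℝ^{2j} and set ‖z‖₂² = ‖z_x‖₂² + ‖z_e‖₂². Suppose w : [0,∞) → ℝ^{2j} is continuous with ‖w(t)‖₂ ≤ M e^{−λ̃ t} ‖w(0)‖₂ for all t ≥ 0, and for each k = j+1,…,n the functions x_k, e_k : [0,∞) → ℝ are differentiable with x_k'(t) = λ_k x_k(t) + b_k ⟨z_x, w(t)⟩ and e_k'(t) = λ_k e_k(t) + b_k ⟨z_e, w(t)⟩. Let X(t)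 ∈ ℝ^{2n} be the concatenation of w(t) with (x_{j+1}(t),…,x_n(t),e_{j+1}(t),…,e_n(t)). Then for all t ≥ 0: ‖X(t)‖₂² ≤ max{2, 2M²} e^{−2λ̃ t} ‖X(0)‖₂² · ( 1 + ‖z‖₂² Σ_{k=j+1}^{n} ( |b_k| / |λ̃ + λ_k| )² ). -/
/-!
Each additional mode solves a scalar equation `f' = c f + u` whose forcing is bounded by
`K e^{-λ̃ s}` (through `w`) while `λ̃ + c < 0`. The function `e^{-c s} f(s)` has derivative
`e^{-c s} u(s)`, dominated by the derivative of the fence `|f 0| + K e^{a s} / a` with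
`a = -(λ̃ + c)`; hence `|f t| ≤ e^{-λ̃ t} (|f 0| + K / |λ̃ + c|)`. Squaring with
`(p + q)² ≤ 2 (p² + q²)`, summing over the modes and adding the decay of `‖w‖²` gives the bound.
-/

open Real

theorem abs_le_exp_mul_of_hasDerivAt_linear_forced {lam c K : ℝ} {f u : ℝ → ℝ}
    (hc : lam + c < 0) (hu : ∀ s ≥ 0, |u s| ≤ K * exp (-lam * s))
    (hf : ∀ s ≥ 0, HasDerivAt f (c * f s + u s) s) {t : ℝ} (ht : 0 ≤ t) :
    |f t| ≤ exp (-lam * t) * (|f 0| + K / |lam + c|) := by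
  rw [abs_of_neg hc]
  set a := -(lam + c)
  have ha : 0 < a := by linarith
  have hK : 0 ≤ K := by simpa using (abs_nonneg _).trans (hu 0 le_rfl)
  have hy : ∀ s ≥ 0, HasDerivAt (fun s => exp (-c * s) * f s) (exp (-c * s) * u s) s := by
    intro s hs
    have he : HasDerivAt (fun s => exp (-c * s)) (exp (-c * s) * -c) s := by
      simpa using ((hasDerivAt_id s).const_mul (-c)).exp
    exact (he.mul (hf s hs)).congr_deriv (by ring)
  have hB : ∀ s, HasDerivAt (fun s => |f 0| + K / a * exp (a * s)) (K * exp (a * s)) s := by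
    intro s
    have he : HasDerivAt (fun s => exp (a * s)) (exp (a * s) * a) s := by
      simpa using ((hasDerivAt_id s).const_mul a).exp
    exact ((he.const_mul (K / a)).const_add |f 0|).congr_deriv (by field_simp)
  have hyt : |exp (-c * t) * f t| ≤ |f 0| + K / a * exp (a * t) := by
    refine image_norm_le_of_norm_deriv_right_le_deriv_boundary
      (f := fun s => exp (-c * s) * f s) (a := 0) (b := t)
      (fun s hs => (hy s hs.1).continuousAt.continuousWithinAt)
      (fun s hs => (hy s hs.1).hasDerivWithinAt) ?_ hB (fun s hs => ?_) ⟨ht, le_rfl⟩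
    · simpa using div_nonneg hK ha.le
    · calc ‖exp (-c * s) * u s‖ = exp (-c * s) * |u s| := by
            rw [Real.norm_eq_abs, abs_mul, abs_of_pos (exp_pos _)]
        _ ≤ exp (-c * s) * (K * exp (-lam * s)) := by gcongr; exact hu s hs.1
        _ = K * exp (a * s) := by rw [mul_left_comm, ← exp_add]; congr 2; ring
  have hft : |f t| = exp (c * t) * |exp (-c * t) * f t| := by
    rw [abs_mul, abs_of_pos (exp_pos _), ← mul_assoc, ← exp_add]; simp
  have hct : exp (c * t) ≤ exp (-lam * t) := exp_le_exp.2 (by nlinarith)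
  calc |f t| ≤ exp (c * t) * (|f 0| + K / a * exp (a * t)) := by
        rw [hft]; gcongr
    _ = exp (c * t) * |f 0| + K / a * exp (-lam * t) := by
        rw [mul_add, mul_left_comm, ← exp_add]; congr 3; ring
    _ ≤ exp (-lam * t) * (|f 0| + K / a) := by
        rw [mul_add, mul_comm (exp _) (K / a)]; gcongr

theorem sq_le_of_hasDerivAt_linear_forced_inner {E : Type*} [NormedAddCommGroup E]
    [InnerProductSpace ℝ E] {lam c β M : ℝ} {z : E} {w : ℝ → E} {f : ℝ → ℝ}
    (hc : lam + c < 0) (hw : ∀ t ≥ (0 : ℝ), ‖w t‖ ≤ M * exp (-lam * t) * ‖w 0‖)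
    (hf : ∀ s ≥ 0, HasDerivAt f (c * f s + β * inner ℝ z (w s)) s) {t : ℝ} (ht : 0 ≤ t) :
    f t ^ 2 ≤ 2 * exp (-(2 * lam) * t) *
      (f 0 ^ 2 + M ^ 2 * ‖w 0‖ ^ 2 * ‖z‖ ^ 2 * (|β| / |lam + c|) ^ 2) := by
  set K := |β| * ‖z‖ * (M * ‖w 0‖)
  have hu : ∀ s ≥ 0, |β * inner ℝ z (w s)| ≤ K * exp (-lam * s) := fun s hs =>
    calc |β * inner ℝ z (w s)| ≤ |β| * (‖z‖ * ‖w s‖) := by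
          rw [abs_mul]; gcongr; exact abs_real_inner_le_norm z (w s)
      _ ≤ |β| * (‖z‖ * (M * exp (-lam * s) * ‖w 0‖)) := by gcongr; exact hw s hs
      _ = K * exp (-lam * s) := by ring
  have hft := abs_le_exp_mul_of_hasDerivAt_linear_forced hc hu hf ht
  have hexp : exp (-lam * t) ^ 2 = exp (-(2 * lam) * t) := by rw [← exp_nat_mul]; ring_nf
  calc f t ^ 2 = |f t| ^ 2 := (sq_abs _).symm
    _ ≤ (exp (-lam * t) * (|f 0| + K / |lam + c|)) ^ 2 := by gcongr
    _ ≤ exp (-lam * t) ^ 2 * (2 * (|f 0| ^ 2 + (K / |lam + c|) ^ 2)) := by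
        rw [mul_pow]; gcongr; exact add_sq_le
    _ = _ := by rw [hexp, sq_abs]; ring

theorem mul_add_two_mul_le_max_mul {m a p q : ℝ} (ha : 0 ≤ a) (hp : 0 ≤ p)
    (hq : 0 ≤ q) : m * a + 2 * (p + m * a * q) ≤ max 2 (2 * m) * (a + p) * (1 + q) := by
  have h2 : 2 ≤ max 2 (2 * m) := le_max_left _ _
  have h2m : 2 * m ≤ max 2 (2 * m) := le_max_right _ _
  nlinarith [mul_nonneg ha hq, mul_nonneg hp hq]

theorem stmt_1_general (j n : ℕ) (lamT M : ℝ) (lam b : ℕ → ℝ)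
    (hlam : ∀ k, j + 1 ≤ k → k ≤ n → lam k < 0 ∧ lamT + lam k < 0)
    (zx ze : EuclideanSpace ℝ (Fin (2 * j)))
    (w : ℝ → EuclideanSpace ℝ (Fin (2 * j)))
    (hw : ∀ t ≥ (0 : ℝ), ‖w t‖ ≤ M * Real.exp (-lamT * t) * ‖w 0‖)
    (x e : ℕ → ℝ → ℝ)
    (hx : ∀ k, j + 1 ≤ k → k ≤ n → ∀ t ≥ (0 : ℝ),
      HasDerivAt (x k) (lam k * x k t + b k * (inner ℝ zx (w t) : ℝ)) t)
    (he : ∀ k, j + 1 ≤ k → k ≤ n → ∀ t ≥ (0 : ℝ),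
      HasDerivAt (e k) (lam k * e k t + b k * (inner ℝ ze (w t) : ℝ)) t)
    (X2 : ℝ → ℝ)
    (hX2 : ∀ t, X2 t = ‖w t‖ ^ 2 + ∑ k ∈ Finset.Icc (j + 1) n, ((x k t) ^ 2 + (e k t) ^ 2)) :
    ∀ t ≥ (0 : ℝ), X2 t ≤ max 2 (2 * M ^ 2) * Real.exp (-(2 * lamT) * t) * X2 0 *
      (1 + (‖zx‖ ^ 2 + ‖ze‖ ^ 2) *
        ∑ k ∈ Finset.Icc (j + 1) n, (|b k| / |lamT + lam k|) ^ 2) := by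
  intro t ht
  set E := exp (-(2 * lamT) * t)
  set S := ∑ k ∈ Finset.Icc (j + 1) n, (|b k| / |lamT + lam k|) ^ 2
  set P := ∑ k ∈ Finset.Icc (j + 1) n, ((x k 0) ^ 2 + (e k 0) ^ 2)
  have hmodes : ∑ k ∈ Finset.Icc (j + 1) n, ((x k t) ^ 2 + (e k t) ^ 2) ≤
      2 * E * (P + M ^ 2 * ‖w 0‖ ^ 2 * ((‖zx‖ ^ 2 + ‖ze‖ ^ 2) * S)) := by
    simp only [P, S, Finset.mul_sum, ← Finset.sum_add_distrib]
    refine Finset.sum_le_sum fun k hk => ?_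
    obtain ⟨hk1, hk2⟩ := Finset.mem_Icc.1 hk
    have hxk := sq_le_of_hasDerivAt_linear_forced_inner (hlam k hk1 hk2).2 hw (hx k hk1 hk2) ht
    have hek := sq_le_of_hasDerivAt_linear_forced_inner (hlam k hk1 hk2).2 hw (he k hk1 hk2) ht
    linear_combination hxk + hek
  have hwt : ‖w t‖ ^ 2 ≤ M ^ 2 * E * ‖w 0‖ ^ 2 :=
    calc ‖w t‖ ^ 2 ≤ (M * exp (-lamT * t) * ‖w 0‖) ^ 2 := by gcongr; exact hw t ht
      _ = M ^ 2 * E * ‖w 0‖ ^ 2 := by simp only [E, mul_pow, ← exp_nat_mul]; ring_nf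
  have hP : 0 ≤ P := Finset.sum_nonneg fun k _ => by positivity
  have hS : 0 ≤ S := Finset.sum_nonneg fun k _ => by positivity
  rw [hX2, hX2]
  calc ‖w t‖ ^ 2 + _ ≤ E * (M ^ 2 * ‖w 0‖ ^ 2 +
        2 * (P + M ^ 2 * ‖w 0‖ ^ 2 * ((‖zx‖ ^ 2 + ‖ze‖ ^ 2) * S))) := by linarith
    _ ≤ E * (max 2 (2 * M ^ 2) * (‖w 0‖ ^ 2 + P) * (1 + (‖zx‖ ^ 2 + ‖ze‖ ^ 2) * S)) := by
        gcongr; exact mul_add_two_mul_le_max_mul (by positivity) hP (by positivity)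
    _ = _ := by ring

/-- Proposition of Section 3: exponential decay bound for the finite-dimensional
closed-loop system extended by additional modes driven by the stabilized core.
`X2 t` is the squared Euclidean norm of the concatenation of `w t` with
`(x_{j+1}(t),…,x_n(t),e_{j+1}(t),…,e_n(t))`. -/
theorem stmt_1 (j n : ℕ) (hj : 0 < j) (hjn : j < n) (lamT M : ℝ) (hlamT : 0 < lamT)
    (hM : 0 < M) (lam b : ℕ → ℝ)
    (hlam : ∀ k, j + 1 ≤ k → k ≤ n → lam k < 0 ∧ lamT + lam k < 0)
    (zx ze : EuclideanSpace ℝ (Fin (2 * j)))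
    (w : ℝ → EuclideanSpace ℝ (Fin (2 * j))) (hw_cont : ContinuousOn w (Set.Ici 0))
    (hw : ∀ t ≥ (0 : ℝ), ‖w t‖ ≤ M * Real.exp (-lamT * t) * ‖w 0‖)
    (x e : ℕ → ℝ → ℝ)
    (hx : ∀ k, j + 1 ≤ k → k ≤ n → ∀ t ≥ (0 : ℝ),
      HasDerivAt (x k) (lam k * x k t + b k * (inner ℝ zx (w t) : ℝ)) t)
    (he : ∀ k, j + 1 ≤ k → k ≤ n → ∀ t ≥ (0 : ℝ),
      HasDerivAt (e k) (lam k * e k t + b k * (inner ℝ ze (w t) : ℝ)) t)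
    (X2 : ℝ → ℝ)
    (hX2 : ∀ t, X2 t = ‖w t‖ ^ 2 + ∑ k ∈ Finset.Icc (j + 1) n, ((x k t) ^ 2 + (e k t) ^ 2)) :
    ∀ t ≥ (0 : ℝ), X2 t ≤ max 2 (2 * M ^ 2) * Real.exp (-(2 * lamT) * t) * X2 0 *
      (1 + (‖zx‖ ^ 2 + ‖ze‖ ^ 2) *
        ∑ k ∈ Finset.Icc (j + 1) n, (|b k| / |lamT + lam k|) ^ 2) :=
  stmt_1_general j n lamT M lam b hlam zx ze w hw x e hx he X2 hX2
end

section
/- Let n ≥ 1 be an integer, α ≥ 1 a real number, μ < 0, and D, S ≥ 0. Suppose x_k : [0,∞) → ℝ, for k ≥ n+1, satisfy |x_k(t)| ≤ e^{μ t} |x_k(0)| + (D/k^α) S for all t ≥ 0 and all k ≥ n+1, and suppose (x_k(0))_{k ≥ n+1} is square-summable. Then for every t ≥ 0 the family (x_k(t))_{k ≥ n+1} is square-summable and ( Σ_{k≥n+1} x_k(t)² )^{1/2} ≤ e^{μ t} ( Σ_{k≥n+1} x_k(0)² )^{1/2} + (π/√6) · D S / √(n^α). -/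
/-!
Minkowski's inequality in `ℓ²` splits the bound into the decaying part `e^{μt} ‖x(0)‖` and the
forcing part. For the latter, `k^{2α} ≥ n^{α-1} k²` when `k ≥ n`, and
`∑_{k>n} 1/k² ≤ ∑_{k>n} (1/(k-1) - 1/k) = 1/n`, so `∑_{k>n} k^{-2α} ≤ n^{-α}`;
the factor `π/√6 ≥ 1` is slack.
-/

open Real

lemma summable_sq_and_sqrt_tsum_sq_le_of_abs_le {ι : Type*} {f a b : ι → ℝ}
    (ha : ∀ i, 0 ≤ a i) (hb : ∀ i, 0 ≤ b i) (hfab : ∀ i, |f i| ≤ a i + b i)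
    (ha2 : Summable fun i => a i ^ 2) (hb2 : Summable fun i => b i ^ 2) :
    (Summable fun i => f i ^ 2) ∧
      √(∑' i, f i ^ 2) ≤ √(∑' i, a i ^ 2) + √(∑' i, b i ^ 2) := by
  have hrpow : ∀ y : ℝ, y ^ ((2 : ℕ) : ℝ) = y ^ 2 := fun y => rpow_natCast y 2
  have hsqrt : ∀ y : ℝ, y ^ (1 / ((2 : ℕ) : ℝ)) = √y := fun y => by
    rw [sqrt_eq_rpow]; norm_num
  obtain ⟨hab2, hmink⟩ := Lp_add_le_tsum_of_nonneg (p := ((2 : ℕ) : ℝ)) (by norm_num) ha hb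
    (by simpa only [hrpow] using ha2) (by simpa only [hrpow] using hb2)
  simp only [hrpow, hsqrt] at hab2 hmink
  have hfle : ∀ i, f i ^ 2 ≤ (a i + b i) ^ 2 := fun i => by
    rw [← sq_abs]
    exact pow_le_pow_left₀ (abs_nonneg _) (hfab i) 2
  have hf2 : Summable fun i => f i ^ 2 := hab2.of_nonneg_of_le (fun i => sq_nonneg _) hfle
  exact ⟨hf2, (sqrt_le_sqrt (hf2.tsum_le_tsum hfle hab2)).trans hmink⟩

lemma rpow_sub_one_mul_sq_le_sq_rpow {c k α : ℝ} (hc : 0 < c) (hck : c ≤ k) (hk : 1 ≤ k)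
    (hα : 1 ≤ α) : c ^ (α - 1) * k ^ 2 ≤ (k ^ α) ^ 2 := by
  have hk0 : 0 < k := hc.trans_le hck
  calc c ^ (α - 1) * k ^ 2 ≤ k ^ (α - 1) * k ^ (α + 1) := by
        gcongr
        exact_mod_cast rpow_le_rpow_of_exponent_le hk (show ((2 : ℕ) : ℝ) ≤ α + 1 by
          push_cast; linarith)
    _ = (k ^ α) ^ 2 := by
        rw [← rpow_add hk0, ← rpow_natCast, ← rpow_mul hk0.le]
        ring_nf

lemma inv_rpow_sq_le_mul_inv_sub_inv {c t α : ℝ} (hc : 0 < c) (ht : 0 ≤ t) (hα : 1 ≤ α) :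
    (((c + 1 + t) ^ α) ^ 2)⁻¹ ≤ c ^ (1 - α) * ((c + t)⁻¹ - (c + 1 + t)⁻¹) := by
  have hct : 0 < c + t := by positivity
  have hsub : (c + t)⁻¹ - (c + 1 + t)⁻¹ = ((c + t) * (c + 1 + t))⁻¹ := by
    field_simp; ring
  calc (((c + 1 + t) ^ α) ^ 2)⁻¹ ≤ (c ^ (α - 1) * (c + 1 + t) ^ 2)⁻¹ := by
        gcongr
        exact rpow_sub_one_mul_sq_le_sq_rpow hc (by linarith) (by linarith) hα
    _ = c ^ (1 - α) * ((c + 1 + t) ^ 2)⁻¹ := by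
        rw [mul_inv, ← rpow_neg hc.le, neg_sub]
    _ ≤ c ^ (1 - α) * ((c + t)⁻¹ - (c + 1 + t)⁻¹) := by
        rw [hsub, sq]
        gcongr
        linarith

lemma sum_range_inv_rpow_sq_le {c α : ℝ} (hc : 0 < c) (hα : 1 ≤ α) (m : ℕ) :
    ∑ i ∈ Finset.range m, (((c + 1 + i) ^ α) ^ 2)⁻¹ ≤ (c ^ α)⁻¹ := by
  calc ∑ i ∈ Finset.range m, (((c + 1 + i) ^ α) ^ 2)⁻¹
      ≤ ∑ i ∈ Finset.range m, c ^ (1 - α) * ((c + i)⁻¹ - (c + (i + 1 : ℕ))⁻¹) :=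
        Finset.sum_le_sum fun i _ => by
          push_cast
          rw [show c + ((i : ℝ) + 1) = c + 1 + i by ring]
          exact inv_rpow_sq_le_mul_inv_sub_inv hc i.cast_nonneg hα
    _ = c ^ (1 - α) * (c⁻¹ - (c + m)⁻¹) := by
        rw [← Finset.mul_sum, Finset.sum_range_sub' (fun i : ℕ => (c + i)⁻¹)]
        simp
    _ ≤ c ^ (1 - α) * c⁻¹ := by
        gcongr
        have : 0 ≤ (c + m)⁻¹ := by positivity
        linarith
    _ = (c ^ α)⁻¹ := by
        rw [← rpow_neg_one, ← rpow_add hc, ← rpow_neg hc.le]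
        ring_nf

lemma div_mul_sq_eq_sq_mul_inv_sq (D S y : ℝ) : (D / y * S) ^ 2 = (D * S) ^ 2 * (y ^ 2)⁻¹ := by
  ring

lemma summable_sq_div_rpow_mul {c α : ℝ} (hc : 0 < c) (hα : 1 ≤ α) (D S : ℝ) :
    Summable fun i : ℕ => (D / (c + 1 + i) ^ α * S) ^ 2 := by
  simp only [div_mul_sq_eq_sq_mul_inv_sq]
  exact (summable_of_sum_range_le (fun i => by positivity)
    (sum_range_inv_rpow_sq_le hc hα)).mul_left _

lemma sqrt_tsum_sq_div_rpow_mul_le {c α D S : ℝ} (hc : 0 < c) (hα : 1 ≤ α) (hD : 0 ≤ D)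
    (hS : 0 ≤ S) :
    √(∑' i : ℕ, (D / (c + 1 + i) ^ α * S) ^ 2) ≤ D * S / √(c ^ α) := by
  have htsum : ∑' i : ℕ, (((c + 1 + i) ^ α) ^ 2)⁻¹ ≤ (c ^ α)⁻¹ :=
    Real.tsum_le_of_sum_range_le (fun i => by positivity) (sum_range_inv_rpow_sq_le hc hα)
  calc √(∑' i : ℕ, (D / (c + 1 + i) ^ α * S) ^ 2) ≤ √((D * S) ^ 2 * (c ^ α)⁻¹) := by
        simp only [div_mul_sq_eq_sq_mul_inv_sq, tsum_mul_left]
        gcongr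
    _ = D * S / √(c ^ α) := by
        rw [sqrt_mul (sq_nonneg _), sqrt_sq (by positivity), sqrt_inv, div_eq_mul_inv]

lemma one_le_pi_div_sqrt_six : 1 ≤ π / √6 := by
  rw [le_div_iff₀ (by positivity), one_mul]
  calc √6 ≤ 3 := by rw [sqrt_le_left] <;> norm_num
    _ ≤ π := pi_gt_three.le

theorem stmt_3_general (n : ℕ) (hn : 1 ≤ n) (α μ D S : ℝ) (hα : 1 ≤ α)
    (hD : 0 ≤ D) (hS : 0 ≤ S) (x : ℕ → ℝ → ℝ)
    (hx : ∀ k, n + 1 ≤ k → ∀ t ≥ (0 : ℝ),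
      |x k t| ≤ Real.exp (μ * t) * |x k 0| + D / (k : ℝ) ^ α * S)
    (h0 : Summable fun i : ℕ => (x (n + 1 + i) 0) ^ 2) :
    ∀ t ≥ (0 : ℝ), (Summable fun i : ℕ => (x (n + 1 + i) t) ^ 2) ∧
      Real.sqrt (∑' i : ℕ, (x (n + 1 + i) t) ^ 2) ≤
        Real.exp (μ * t) * Real.sqrt (∑' i : ℕ, (x (n + 1 + i) 0) ^ 2) +
          Real.pi / Real.sqrt 6 * D * S / Real.sqrt ((n : ℝ) ^ α) := by
  intro t ht
  have hn0 : (0 : ℝ) < n := by exact_mod_cast hn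
  have hdecay_sq : ∀ i, (exp (μ * t) * |x (n + 1 + i) 0|) ^ 2 = exp (μ * t) ^ 2 * x (n + 1 + i) 0 ^ 2 :=
    fun i => by rw [mul_pow, sq_abs]
  have hbound : ∀ i : ℕ, |x (n + 1 + i) t| ≤
      exp (μ * t) * |x (n + 1 + i) 0| + D / ((n : ℝ) + 1 + i) ^ α * S := fun i => by
    simpa using hx (n + 1 + i) (by omega) t ht
  obtain ⟨hsum, hle⟩ := summable_sq_and_sqrt_tsum_sq_le_of_abs_le (fun i => by positivity)
    (fun i => by positivity) hbound (by simpa only [hdecay_sq] using h0.mul_left _)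
    (summable_sq_div_rpow_mul hn0 hα D S)
  refine ⟨hsum, hle.trans (add_le_add (le_of_eq ?_) ?_)⟩
  · simp only [hdecay_sq, tsum_mul_left]
    rw [sqrt_mul (sq_nonneg _), sqrt_sq (exp_pos _).le]
  · calc _ ≤ D * S / √((n : ℝ) ^ α) := sqrt_tsum_sq_div_rpow_mul_le hn0 hα hD hS
      _ ≤ π / √6 * D * S / √((n : ℝ) ^ α) := by
        rw [mul_assoc]
        gcongr ?_ / _
        exact le_mul_of_one_le_left (by positivity) one_le_pi_div_sqrt_six

/-- The ℓ²-estimate (4.3) of Lemma 4.1: the ℓ²-norm of the fast modes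
(indexed by `k ≥ n+1`, written here as `k = n+1+i` for `i : ℕ`) decays
exponentially up to a term of order `n^{-α/2}` times the input bound `S`. -/
theorem stmt_3 (n : ℕ) (hn : 1 ≤ n) (α μ D S : ℝ) (hα : 1 ≤ α) (hμ : μ < 0)
    (hD : 0 ≤ D) (hS : 0 ≤ S) (x : ℕ → ℝ → ℝ)
    (hx : ∀ k, n + 1 ≤ k → ∀ t ≥ (0 : ℝ),
      |x k t| ≤ Real.exp (μ * t) * |x k 0| + D / (k : ℝ) ^ α * S)
    (h0 : Summable fun i : ℕ => (x (n + 1 + i) 0) ^ 2) :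
    ∀ t ≥ (0 : ℝ), (Summable fun i : ℕ => (x (n + 1 + i) t) ^ 2) ∧
      Real.sqrt (∑' i : ℕ, (x (n + 1 + i) t) ^ 2) ≤
        Real.exp (μ * t) * Real.sqrt (∑' i : ℕ, (x (n + 1 + i) 0) ^ 2) +
          Real.pi / Real.sqrt 6 * D * S / Real.sqrt ((n : ℝ) ^ α) :=
  stmt_3_general n hn α μ D S hα hD hS x hx h0
end

section
/- Let n ≥ 1 be an integer, α > 1 a real number, and c₂, D ≥ 0 constants. Let λ : ℕ → ℝ with λ_k < 0 for all k ≥ n+1 and Σ_{k≥n+1} 1/|λ_k| < ∞, and let (c_k)_{k≥n+1} be reals with |c_k| ≤ c₂. Let S : [0,∞) → [0,∞) and suppose x_k : [0,∞) → ℝ satisfy |x_k(t)| ≤ e^{λ_k t} |x_k(0)| + (D/k^α) S(t) for all k ≥ n+1 and t ≥ 0, with (x_k(0))_{k≥n+1} square-summable. Then for every t > 0 the series Σ_{k≥n+1} |c_k x_k(t)| converges and Σ_{k≥n+1} |c_k x_k(t)| ≤ c₂ η_n(t) ( Σ_{k≥n+1} x_k(0)² )^{1/2} + ( c₂ D ζ(α)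 / n^{α−1} ) S(t), where η_n(t) = Σ_{k=n+1}^∞ e^{λ_k t} and ζ(α) = Σ_{k=1}^∞ k^{−α}. -/
/-!
Bounding `|c_k|` by `c₂` and `|x_k(0)|` by the `ℓ²`-norm of `x(0)`, every term is at most
`c₂ e^{λ_k t} ‖x(0)‖₂ + c₂ D S(t) k^{-α}`, so it remains to sum both majorants. The
exponentials are summable because `e^{-u} ≤ 1/u` for `u > 0`. For the tail of the `p`-series,
cut the indices `k ≥ n + 1` into blocks of `n` consecutive integers: the `m`-th block has `n`
terms, each at most `(n (m + 1))^{-α}`, so the tail is at most `n · n^{-α} ζ(α) = ζ(α) / n^{α-1}`.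
-/

open Real

theorem summable_exp_mul_of_summable_one_div_abs {ι : Type*} {l : ι → ℝ} (hl : ∀ i, l i < 0)
    (hsum : Summable fun i => 1 / |l i|) {t : ℝ} (ht : 0 < t) :
    Summable fun i => exp (l i * t) := by
  refine .of_nonneg_of_le (fun i => (exp_pos _).le) (fun i => ?_) (hsum.div_const t)
  have hu : 0 < |l i| * t := mul_pos (abs_pos.mpr (hl i).ne) ht
  calc exp (l i * t) = (exp (|l i| * t))⁻¹ := by
        rw [abs_of_neg (hl i), ← exp_neg, neg_mul, neg_neg]
    _ ≤ (|l i| * t)⁻¹ := inv_anti₀ hu (by linarith [add_one_le_exp (|l i| * t)])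
    _ = 1 / |l i| / t := by rw [div_div, one_div]

theorem abs_le_sqrt_tsum_sq {ι : Type*} {f : ι → ℝ} (hf : Summable fun i => f i ^ 2) (i : ι) :
    |f i| ≤ √(∑' j, f j ^ 2) :=
  abs_le_sqrt (hf.le_tsum i fun j _ => sq_nonneg (f j))

theorem HasSum.comp_div_of_nonneg {f : ℕ → ℝ} {a : ℝ} (hf : HasSum f a) (hf₀ : 0 ≤ f)
    (n : ℕ) [NeZero n] : HasSum (fun i => f (i / n)) (n * a) := by
  have hone : HasSum (fun _ : Fin n => (1 : ℝ)) n := by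
    simpa using hasSum_fintype (fun _ : Fin n => (1 : ℝ))
  have hprod := hf.mul hone (hf.summable.mul_of_nonneg hone.summable hf₀ fun _ => zero_le_one)
  rw [mul_comm, ← (Nat.divModEquiv n).symm.hasSum_iff]
  have hquot (p : ℕ × Fin n) : (Nat.divModEquiv n).symm p / n = p.1 := by
    rw [Nat.divModEquiv_symm_apply, add_comm, Nat.add_mul_div_right _ _ (NeZero.pos n),
      Nat.div_eq_of_lt p.2.is_lt, Nat.zero_add]
  simpa only [Function.comp_def, hquot, mul_one] using hprod

theorem nat_add_rpow_neg_le {α : ℝ} (hα : 0 ≤ α) {n : ℕ} (hn : 0 < n) (i : ℕ) :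
    ((n + 1 + i : ℕ) : ℝ) ^ (-α) ≤ (n : ℝ) ^ (-α) * ((i / n + 1 : ℕ) : ℝ) ^ (-α) := by
  have hle : n * (i / n + 1) ≤ n + 1 + i := by
    have := Nat.div_mul_le_self i n
    nlinarith
  rw [← mul_rpow (Nat.cast_nonneg n) (Nat.cast_nonneg _), ← Nat.cast_mul]
  exact rpow_le_rpow_of_nonpos (by positivity) (by exact_mod_cast hle) (neg_nonpos.mpr hα)

theorem summable_nat_add_rpow_neg {α : ℝ} (hα : 1 < α) (m : ℕ) :
    Summable fun i : ℕ => ((m + i : ℕ) : ℝ) ^ (-α) := by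
  have := (summable_nat_add_iff m).mpr (summable_nat_rpow.mpr (by linarith : -α < -1))
  simpa only [Nat.cast_add, add_comm] using this

theorem tsum_nat_add_rpow_neg_le {α : ℝ} (hα : 1 < α) {n : ℕ} (hn : 0 < n) :
    ∑' i : ℕ, ((n + 1 + i : ℕ) : ℝ) ^ (-α) ≤
      (∑' m : ℕ, ((m + 1 : ℕ) : ℝ) ^ (-α)) / (n : ℝ) ^ (α - 1) := by
  have : NeZero n := ⟨hn.ne'⟩
  have hζ : HasSum (fun m : ℕ => ((m + 1 : ℕ) : ℝ) ^ (-α))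
      (∑' m : ℕ, ((m + 1 : ℕ) : ℝ) ^ (-α)) := by
    simpa only [add_comm] using (summable_nat_add_rpow_neg hα 1).hasSum
  have hblocks := (hζ.comp_div_of_nonneg (fun m => by positivity) n).mul_left ((n : ℝ) ^ (-α))
  refine (hasSum_le (nat_add_rpow_neg_le (by linarith) hn)
    (summable_nat_add_rpow_neg hα (n + 1)).hasSum hblocks).trans_eq ?_
  have hn' : (0 : ℝ) < n := by exact_mod_cast hn
  rw [rpow_sub hn', rpow_one, rpow_neg hn'.le]
  field_simp

theorem abs_mul_le_of_abs_le_decay_add_input {c c₂ y y₀ e B D k α s : ℝ} (hc : |c| ≤ c₂)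
    (hy : |y| ≤ e * |y₀| + D / k ^ α * s) (he : 0 ≤ e) (hy₀ : |y₀| ≤ B) (hk : 0 ≤ k) :
    |c * y| ≤ c₂ * e * B + c₂ * D * s * k ^ (-α) := by
  rw [abs_mul, rpow_neg hk]
  calc |c| * |y| ≤ c₂ * (e * B + D / k ^ α * s) :=
        mul_le_mul hc (hy.trans (by gcongr)) (abs_nonneg y) ((abs_nonneg c).trans hc)
    _ = _ := by ring

/-- Lemma 4.2 (IOS estimate for the weighted fast modes `z_k = c_k x_k` under
Assumptions (A1) and (A2a)): the ℓ¹-norm of `(z_k)_{k>n}` is bounded by a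
transient term involving `η_n(t) = Σ_{k≥n+1} e^{λ_k t}` and an input gain
of order `n^{1-α}` involving `ζ(α) = Σ_{k≥1} k^{-α}`. Indices `k ≥ n+1`
are written as `k = n+1+i` for `i : ℕ`. -/
theorem stmt_9 (n : ℕ) (hn : 1 ≤ n) (α c₂ D : ℝ) (hα : 1 < α) (hc₂ : 0 ≤ c₂) (hD : 0 ≤ D)
    (lam c : ℕ → ℝ) (hlam : ∀ k, n + 1 ≤ k → lam k < 0)
    (hlamsum : Summable fun i : ℕ => 1 / |lam (n + 1 + i)|)
    (hc : ∀ k, n + 1 ≤ k → |c k| ≤ c₂)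
    (S : ℝ → ℝ) (hS : ∀ t, 0 ≤ S t)
    (x : ℕ → ℝ → ℝ)
    (hx : ∀ k, n + 1 ≤ k → ∀ t ≥ (0 : ℝ),
      |x k t| ≤ Real.exp (lam k * t) * |x k 0| + D / (k : ℝ) ^ α * S t)
    (h0 : Summable fun i : ℕ => (x (n + 1 + i) 0) ^ 2) :
    ∀ t > (0 : ℝ), (Summable fun i : ℕ => |c (n + 1 + i) * x (n + 1 + i) t|) ∧
      ∑' i : ℕ, |c (n + 1 + i) * x (n + 1 + i) t| ≤
        c₂ * (∑' i : ℕ, Real.exp (lam (n + 1 + i) * t)) *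
            Real.sqrt (∑' i : ℕ, (x (n + 1 + i) 0) ^ 2) +
          c₂ * D * (∑' i : ℕ, ((i + 1 : ℕ) : ℝ) ^ (-α)) / (n : ℝ) ^ (α - 1) * S t := by
  intro t ht
  set B := √(∑' i : ℕ, (x (n + 1 + i) 0) ^ 2)
  have hexp := summable_exp_mul_of_summable_one_div_abs (fun i => hlam (n + 1 + i) (by omega))
    hlamsum ht
  have htail := summable_nat_add_rpow_neg hα (n + 1)
  have hterm (i : ℕ) : |c (n + 1 + i) * x (n + 1 + i) t| ≤
      c₂ * exp (lam (n + 1 + i) * t) * B + c₂ * D * S t * ((n + 1 + i : ℕ) : ℝ) ^ (-α) :=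
    abs_mul_le_of_abs_le_decay_add_input (hc _ (by omega)) (hx _ (by omega) t ht.le)
      (exp_pos _).le (abs_le_sqrt_tsum_sq h0 i) (Nat.cast_nonneg _)
  have hmajorant := (hexp.mul_left c₂ |>.mul_right B).add (htail.mul_left (c₂ * D * S t))
  have hsummable := hmajorant.of_nonneg_of_le (fun _ => abs_nonneg _) hterm
  refine ⟨hsummable, ?_⟩
  calc ∑' i : ℕ, |c (n + 1 + i) * x (n + 1 + i) t|
      ≤ c₂ * (∑' i : ℕ, exp (lam (n + 1 + i) * t)) * B +
          c₂ * D * S t * ∑' i : ℕ, ((n + 1 + i : ℕ) : ℝ) ^ (-α) := by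
        rw [← tsum_mul_left, ← tsum_mul_right, ← tsum_mul_left,
          ← (hexp.mul_left c₂ |>.mul_right B).tsum_add (htail.mul_left _)]
        exact hsummable.tsum_le_tsum hterm hmajorant
    _ ≤ c₂ * (∑' i : ℕ, exp (lam (n + 1 + i) * t)) * B +
          c₂ * D * S t * ((∑' i : ℕ, ((i + 1 : ℕ) : ℝ) ^ (-α)) / (n : ℝ) ^ (α - 1)) := by
        gcongr
        · exact mul_nonneg (mul_nonneg hc₂ hD) (hS t)
        · exact tsum_nat_add_rpow_neg_le hα hn
    _ = _ := by ring
end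

section
/- Let s ≥ 1 and let a : {1,…,s} → ℝ be not identically zero and p : {1,…,s} → ℝ be pairwise distinct with p_i < 0 for all i. Define h(τ) = Σ_{i=1}^s a_i e^{p_i τ} and H(u) = ∫₀^u h(τ) dτ. Then sup_{u ≥ 0} |H(u)| is finite and for every t ≥ 0: ∫₀^t |h(τ)| dτ ≤ 2 s · sup_{u ≥ 0} |H(u)|. -/
/-!
Write `h = ∑ aᵢ e^{pᵢτ}`. Dividing by `e^{p₀τ}` and differentiating removes one term, and by
Rolle's theorem a zero of the derivative lies between any two zeros of `h`; by induction an
exponential sum with `s` distinct exponents has fewer than `s` real zeros (Descartes' rule for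
exponential sums). Between consecutive zeros `h` has constant sign, so there `∫ |h| = |H v - H u|`,
which is at most `2 sup |H|`; at most `s` such pieces cover `[0, t]`. Finally `H` is bounded on
`[0, ∞)` because `H u = ∑ (aᵢ / pᵢ) (e^{pᵢu} - 1)` with all `pᵢ < 0`.
-/

open Real Set Function

noncomputable def expSum {ι : Type*} [Fintype ι] (a p : ι → ℝ) (x : ℝ) : ℝ :=
  ∑ i, a i * exp (p i * x)

section ExpSum

variable {ι : Type*} [Fintype ι] (a : ι → ℝ)

theorem continuous_expSum (p : ι → ℝ) : Continuous (expSum a p) := by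
  unfold expSum
  fun_prop

theorem hasDerivAt_expSum (p : ι → ℝ) (x : ℝ) :
    HasDerivAt (expSum a p) (expSum (fun i => a i * p i) p x) x := by
  unfold expSum
  refine (HasDerivAt.fun_sum fun i _ =>
    (((hasDerivAt_id x).const_mul (p i)).exp).const_mul (a i)).congr_deriv ?_
  simp only [id, mul_one]
  exact Finset.sum_congr rfl fun i _ => by ring

theorem expSum_mul_exp (p : ι → ℝ) (c x : ℝ) :
    expSum a p x * exp (c * x) = expSum a (fun i => p i + c) x := by
  simp only [expSum, Finset.sum_mul, mul_assoc, ← exp_add, add_mul]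

theorem integral_expSum {p : ι → ℝ} (hp : ∀ i, p i ≠ 0) (x₀ x₁ : ℝ) :
    ∫ x in x₀..x₁, expSum a p x =
      expSum (fun i => a i / p i) p x₁ - expSum (fun i => a i / p i) p x₀ := by
  refine intervalIntegral.integral_eq_sub_of_hasDerivAt (fun x _ => ?_)
    ((continuous_expSum a p).intervalIntegrable _ _)
  simpa only [div_mul_cancel₀ _ (hp _)] using hasDerivAt_expSum (fun i => a i / p i) p x

theorem abs_expSum_le {p : ι → ℝ} (hp : ∀ i, p i ≤ 0) {x : ℝ} (hx : 0 ≤ x) :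
    |expSum a p x| ≤ ∑ i, |a i| := by
  refine (Finset.abs_sum_le_sum_abs _ _).trans (Finset.sum_le_sum fun i _ => ?_)
  rw [abs_mul, abs_exp]
  exact mul_le_of_le_one_right (abs_nonneg _)
    (exp_le_one_iff.2 (mul_nonpos_of_nonpos_of_nonneg (hp i) hx))

end ExpSum

theorem exists_expSum_ne_zero_of_strictMono {s : ℕ} {a p : Fin s → ℝ} (hp : Injective p)
    (ha : ∃ i, a i ≠ 0) {x : Fin s → ℝ} (hx : StrictMono x) : ∃ i, expSum a p (x i) ≠ 0 := by
  induction s with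
  | zero => exact isEmptyElim ha.choose
  | succ s ih =>
    by_contra! hzero
    obtain ⟨j₀, hj₀⟩ : ∃ j : Fin s, a j.succ ≠ 0 := by
      by_contra! htail
      have ha₀ : a 0 ≠ 0 := by
        obtain ⟨i, hi⟩ := ha
        cases i using Fin.cases with
        | zero => exact hi
        | succ j => exact absurd (htail j) hi
      have hx₀ : expSum a p (x 0) = a 0 * exp (p 0 * x 0) := by
        simp [expSum, Fin.sum_univ_succ, htail]
      exact mul_ne_zero ha₀ (exp_pos _).ne' (hx₀ ▸ hzero 0)
    set r : Fin s → ℝ := fun j => p j.succ - p 0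
    set b : Fin s → ℝ := fun j => a j.succ * r j
    have hg : ∀ y, HasDerivAt (expSum a fun i => p i + -p 0) (expSum b r y) y := fun y => by
      convert hasDerivAt_expSum a (fun i => p i + -p 0) y using 1
      simp [expSum, Fin.sum_univ_succ, b, r, sub_eq_add_neg, mul_assoc]
    have hgx : ∀ i, expSum a (fun i => p i + -p 0) (x i) = 0 := fun i => by
      rw [← expSum_mul_exp, hzero i, zero_mul]
    have hrolle : ∀ j : Fin s, ∃ y ∈ Ioo (x j.castSucc) (x j.succ), expSum b r y = 0 := fun j =>
      exists_hasDerivAt_eq_zero (hx j.castSucc_lt_succ) (continuous_expSum _ _).continuousOn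
        ((hgx _).trans (hgx _).symm) fun y _ => hg y
    choose y hy hy₀ using hrolle
    have hy_mono : StrictMono y := fun i j hij =>
      ((hy i).2.trans_le (hx.monotone (Fin.succ_le_castSucc_iff.2 hij))).trans (hy j).1
    have hr : Injective r := fun i j hij => Fin.succ_injective _ (hp (by simpa [r] using hij))
    have hb : b j₀ ≠ 0 := mul_ne_zero hj₀ (sub_ne_zero.2 (hp.ne (Fin.succ_ne_zero _)))
    obtain ⟨j, hj⟩ := ih hr ⟨j₀, hb⟩ hy_mono
    exact hj (hy₀ j)

theorem encard_setOf_expSum_eq_zero_lt {s : ℕ} {a p : Fin s → ℝ} (hp : Injective p)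
    (ha : ∃ i, a i ≠ 0) : {x | expSum a p x = 0}.encard < s := by
  by_contra! hs
  obtain ⟨T, hTZ, hTs⟩ := exists_subset_encard_eq hs
  have hT : T.Finite := finite_of_encard_eq_coe hTs
  have hcard : hT.toFinset.card = s := by
    simpa [hT.encard_eq_coe_toFinset_card] using hTs
  obtain ⟨i, hi⟩ :=
    exists_expSum_ne_zero_of_strictMono hp ha (hT.toFinset.orderEmbOfFin hcard).strictMono
  exact hi (hTZ (hT.mem_toFinset.1 (hT.toFinset.orderEmbOfFin_mem hcard i)))

section IntegralAbs

variable {f : ℝ → ℝ} {a b : ℝ}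

theorem nonneg_or_nonpos_of_ne_zero (hf : ContinuousOn f (Icc a b))
    (hz : ∀ x ∈ Ioo a b, f x ≠ 0) : (∀ x ∈ Icc a b, 0 ≤ f x) ∨ (∀ x ∈ Icc a b, f x ≤ 0) := by
  by_contra! hsign
  obtain ⟨⟨u, hu, hfu⟩, ⟨v, hv, hfv⟩⟩ := hsign
  rcases lt_trichotomy u v with huv | rfl | hvu
  · obtain ⟨c, hc, hc₀⟩ :=
      intermediate_value_Ioo huv.le (hf.mono (Icc_subset_Icc hu.1 hv.2)) ⟨hfu, hfv⟩
    exact hz c ⟨hu.1.trans_lt hc.1, hc.2.trans_le hv.2⟩ hc₀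
  · exact (hfu.trans hfv).false
  · obtain ⟨c, hc, hc₀⟩ :=
      intermediate_value_Ioo' hvu.le (hf.mono (Icc_subset_Icc hv.1 hu.2)) ⟨hfu, hfv⟩
    exact hz c ⟨hv.1.trans_lt hc.1, hc.2.trans_le hu.2⟩ hc₀

theorem integral_abs_eq_abs_integral_of_nonneg (hab : a ≤ b) (hf : ∀ x ∈ Icc a b, 0 ≤ f x) :
    ∫ x in a..b, |f x| = |∫ x in a..b, f x| := by
  rw [intervalIntegral.integral_congr fun x hx => abs_of_nonneg (hf x (uIcc_of_le hab ▸ hx)),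
    abs_of_nonneg (intervalIntegral.integral_nonneg hab hf)]

theorem integral_abs_eq_abs_integral_of_ne_zero (hab : a ≤ b) (hf : ContinuousOn f (Icc a b))
    (hz : ∀ x ∈ Ioo a b, f x ≠ 0) : ∫ x in a..b, |f x| = |∫ x in a..b, f x| := by
  rcases nonneg_or_nonpos_of_ne_zero hf hz with hpos | hneg
  · exact integral_abs_eq_abs_integral_of_nonneg hab hpos
  · simpa [intervalIntegral.integral_neg] using
      integral_abs_eq_abs_integral_of_nonneg (f := fun x => -f x) hab
        fun x hx => neg_nonneg.2 (hneg x hx)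

theorem integral_abs_le_of_zeros_subset (hf : Continuous f) {K : ℝ}
    (hK : ∀ u v, a ≤ u → u ≤ v → v ≤ b → |∫ x in u..v, f x| ≤ K) (hab : a ≤ b) (Z : Finset ℝ)
    (hZ : ∀ x ∈ Ioo a b, f x = 0 → x ∈ Z) : ∫ x in a..b, |f x| ≤ (Z.card + 1) * K := by
  have hK₀ : 0 ≤ K := (abs_nonneg _).trans (hK a a le_rfl le_rfl hab)
  induction Z using Finset.induction_on_max generalizing b with
  | empty =>
    rw [integral_abs_eq_abs_integral_of_ne_zero hab hf.continuousOn fun x hx hx₀ => by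
      simpa using hZ x hx hx₀]
    simpa using hK a b le_rfl hab le_rfl
  | insert z Z hzZ ih =>
    rw [Finset.card_insert_of_notMem fun hz => (hzZ z hz).false]
    push_cast
    by_cases hz : z ∈ Ioo a b
    · have hleft := ih (fun u v hu huv hvz => hK u v hu huv (hvz.trans hz.2.le)) hz.1.le
        fun x hx hx₀ =>
        (Finset.mem_insert.1 (hZ x ⟨hx.1, hx.2.trans hz.2⟩ hx₀)).resolve_left hx.2.ne
      have hright : ∫ x in z..b, |f x| ≤ K := by
        rw [integral_abs_eq_abs_integral_of_ne_zero hz.2.le hf.continuousOn fun x hx hx₀ => ?_]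
        · exact hK z b hz.1.le hz.2.le le_rfl
        rcases Finset.mem_insert.1 (hZ x ⟨hz.1.trans hx.1, hx.2⟩ hx₀) with rfl | hxZ
        · exact hx.1.false
        · exact (hx.1.trans (hzZ x hxZ)).false
      rw [← intervalIntegral.integral_add_adjacent_intervals (hf.abs.intervalIntegrable a z)
        (hf.abs.intervalIntegrable z b)]
      linarith
    · have := ih hK hab fun x hx hx₀ =>
        (Finset.mem_insert.1 (hZ x hx hx₀)).resolve_left fun hxz => hz (hxz ▸ hx)
      linarith

end IntegralAbs

theorem stmt_10_general (s : ℕ) (a p : Fin s → ℝ) (ha : ∃ i, a i ≠ 0)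
    (hp_inj : Function.Injective p) (hp : ∀ i, p i < 0)
    (h H : ℝ → ℝ)
    (hh : ∀ τ, h τ = ∑ i : Fin s, a i * Real.exp (p i * τ))
    (hH : ∀ u, H u = ∫ τ in (0:ℝ)..u, h τ) :
    BddAbove ((fun u => |H u|) '' Set.Ici (0:ℝ)) ∧
      ∀ t ≥ (0 : ℝ), (∫ τ in (0:ℝ)..t, |h τ|) ≤
        2 * s * sSup ((fun u => |H u|) '' Set.Ici (0:ℝ)) := by
  obtain rfl : h = expSum a p := funext hh
  set M := sSup ((fun u => |H u|) '' Ici 0)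
  have hbdd : BddAbove ((fun u => |H u|) '' Ici 0) := by
    refine ⟨2 * ∑ i, |a i / p i|, ?_⟩
    rintro _ ⟨u, hu, rfl⟩
    dsimp only
    have hp' : ∀ i, p i ≤ 0 := fun i => (hp i).le
    rw [hH, integral_expSum a fun i => (hp i).ne]
    linarith [abs_sub (expSum (fun i => a i / p i) p u) (expSum (fun i => a i / p i) p 0),
      abs_expSum_le (fun i => a i / p i) hp' hu,
      abs_expSum_le (fun i => a i / p i) hp' le_rfl]
  refine ⟨hbdd, fun t ht => ?_⟩
  have hHM : ∀ u ≥ 0, |H u| ≤ M := fun u hu => le_csSup hbdd ⟨u, hu, rfl⟩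
  have hM : 0 ≤ M := (abs_nonneg _).trans (hHM 0 le_rfl)
  have hincr : ∀ u v, 0 ≤ u → u ≤ v → v ≤ t → |∫ τ in u..v, expSum a p τ| ≤ 2 * M := by
    intro u v hu huv _
    have hint := (continuous_expSum a p).intervalIntegrable (μ := MeasureTheory.volume) 0
    rw [← intervalIntegral.integral_interval_sub_left (hint v) (hint u), ← hH, ← hH]
    linarith [abs_sub (H v) (H u), hHM u hu, hHM v (hu.trans huv)]
  have hzeros := encard_setOf_expSum_eq_zero_lt hp_inj ha
  have hfin : {x | expSum a p x = 0}.Finite := encard_lt_top_iff.1 (hzeros.trans (by simp))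
  have hcard : hfin.toFinset.card < s := by
    simpa [hfin.encard_eq_coe_toFinset_card] using hzeros
  calc ∫ τ in (0:ℝ)..t, |expSum a p τ|
      ≤ (hfin.toFinset.card + 1) * (2 * M) :=
        integral_abs_le_of_zeros_subset (continuous_expSum a p) hincr ht hfin.toFinset
          fun x _ hx => hfin.mem_toFinset.2 hx
    _ ≤ s * (2 * M) := by gcongr; exact_mod_cast hcard
    _ = 2 * s * M := by ring

/-- Key step in the proof of Lemma 4.3: for an exponential sum
`h(τ) = Σ_{i=1}^s a_i e^{p_i τ}` with negative pairwise distinct exponents,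
the primitive `H(u) = ∫₀^u h` is bounded on `[0,∞)` and
`∫₀^t |h(τ)| dτ ≤ 2 s sup_{u≥0} |H(u)|`. -/
theorem stmt_10 (s : ℕ) (hs : 1 ≤ s) (a p : Fin s → ℝ) (ha : ∃ i, a i ≠ 0)
    (hp_inj : Function.Injective p) (hp : ∀ i, p i < 0)
    (h H : ℝ → ℝ)
    (hh : ∀ τ, h τ = ∑ i : Fin s, a i * Real.exp (p i * τ))
    (hH : ∀ u, H u = ∫ τ in (0:ℝ)..u, h τ) :
    BddAbove ((fun u => |H u|) '' Set.Ici (0:ℝ)) ∧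
      ∀ t ≥ (0 : ℝ), (∫ τ in (0:ℝ)..t, |h τ|) ≤
        2 * s * sSup ((fun u => |H u|) '' Set.Ici (0:ℝ)) :=
  stmt_10_general s a p ha hp_inj hp h H hh hH
end

section
/- Let n, s, k₁ be positive integers and c₁, c₂, c₃, c₄, c₅, γ > 0 constants. Let λ, b, c : ℕ → ℝ satisfy, for all k ≥ n: λ_k ≤ −c₃ k², |b_k| ≤ c₁ k, |c_k| ≤ c₂, the values (λ_k)_{k≥n} are pairwise distinct, and |1/λ_k − 1/λ_{k'}| ≤ γ k^{−3} whenever n ≤ k ≤ k' ≤ k + k₁. For each j ∈ ℕ let S_j ⊂ ℕ be a finite set with at most s elements such that min S_j ≥ c₄ j, max S_j ≤ min S_j + k₁, and |Σ_{k∈S_j} (c_k b_k / λ_k)| ≤ c₅ j^{−2}. Then there exists a constant C₃ > 0 such that for all t ≥ 0 and all j ∈ ℕ with c₄ j ≥ n: ∫₀^t | Σ_{k∈S_j} c_k b_k e^{λ_k τ} | dτ ≤ C₃ / j². -/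
/-!
Write each mode as `d_k e^{λ_k τ} = (d_k / λ_k) · λ_k e^{λ_k τ}` and compare it with the mode
`μ e^{μ τ}` of the smallest index `k₀ ∈ S_j`, `μ = λ_{k₀}`. The sum splits into
`(∑ d_k / λ_k) · μ e^{μ τ}`, whose L¹ norm on `[0, t]` is at most `|∑ d_k / λ_k| ≤ c₅ j⁻²`, and
the differences `λ_k e^{λ_k τ} - μ e^{μ τ}`, whose L¹ norm is at most `2 |1 - λ_k / μ|`. The
`k`-th difference thus costs `2 |d_k| |1/λ_k - 1/μ| ≲ k · k₀⁻³ ≲ j⁻²` by the gap condition, and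
there are at most `s` of them.
-/

open Real intervalIntegral

theorem integral_mul_exp_mul (a t : ℝ) : ∫ τ in (0:ℝ)..t, a * exp (a * τ) = exp (a * t) - 1 := by
  have hderiv : ∀ τ ∈ Set.uIcc 0 t, HasDerivAt (fun τ => exp (a * τ)) (a * exp (a * τ)) τ := by
    intro τ _
    simpa [mul_comm] using ((hasDerivAt_id τ).const_mul a).exp
  rw [integral_eq_sub_of_hasDerivAt hderiv (Continuous.intervalIntegrable (by fun_prop) _ _)]
  simp

theorem integral_abs_mul_exp_sub_mul_exp_le_of_le {a b t : ℝ} (hab : a ≤ b) (hb : b < 0)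
    (ht : 0 ≤ t) :
    ∫ τ in (0:ℝ)..t, |a * exp (a * τ) - b * exp (b * τ)| ≤ 2 * (1 - b / a) := by
  have ha : a < 0 := hab.trans_lt hb
  -- integrate the pointwise bound `|a e^{aτ} - b e^{bτ}| ≤ -b e^{bτ} + (2b - a) e^{aτ}`
  calc ∫ τ in (0:ℝ)..t, |a * exp (a * τ) - b * exp (b * τ)|
      ≤ ∫ τ in (0:ℝ)..t, (-(b * exp (b * τ)) + (2 * b - a) / a * (a * exp (a * τ))) := by
        refine integral_mono_on ht (Continuous.intervalIntegrable (by fun_prop) _ _)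
          (Continuous.intervalIntegrable (by fun_prop) _ _) fun τ hτ => ?_
        have hexp : exp (a * τ) ≤ exp (b * τ) := exp_le_exp.2 (by nlinarith [hτ.1])
        have hpos := exp_pos (a * τ)
        have hcancel : (2 * b - a) / a * (a * exp (a * τ)) = (2 * b - a) * exp (a * τ) := by
          field_simp [ha.ne]
        rw [hcancel, abs_le]
        constructor <;> nlinarith
    _ = -(exp (b * t) - 1) + (2 * b - a) / a * (exp (a * t) - 1) := by
        rw [integral_add (Continuous.intervalIntegrable (by fun_prop) _ _)
          (Continuous.intervalIntegrable (by fun_prop) _ _), integral_neg,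
          integral_const_mul ((2 * b - a) / a), integral_mul_exp_mul, integral_mul_exp_mul]
    _ ≤ 2 * (1 - b / a) := by
        have hexp : exp (a * t) ≤ exp (b * t) := exp_le_exp.2 (by nlinarith)
        have hpos := exp_pos (a * t)
        have hr : b / a ≤ 1 := (div_le_one_of_neg ha).2 hab
        rw [sub_div, div_self ha.ne, mul_div_assoc]
        nlinarith

theorem integral_abs_mul_exp_sub_mul_exp_le {a b t : ℝ} (ha : a < 0) (hb : b < 0) (ht : 0 ≤ t) :
    ∫ τ in (0:ℝ)..t, |a * exp (a * τ) - b * exp (b * τ)| ≤ 2 * |1 - a / b| := by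
  rcases le_total a b with hab | hba
  · have hr : 0 < b / a := div_pos_of_neg_of_neg hb ha
    have hamgm : 1 - b / a ≤ (b / a)⁻¹ - 1 := by
      nlinarith [mul_inv_cancel₀ hr.ne', sq_nonneg (1 - b / a), inv_pos.2 hr]
    rw [← inv_div b a]
    linarith [integral_abs_mul_exp_sub_mul_exp_le_of_le hab hb ht, neg_le_abs (1 - (b / a)⁻¹)]
  · simp_rw [abs_sub_comm (a * _)]
    linarith [integral_abs_mul_exp_sub_mul_exp_le_of_le hba ha ht, le_abs_self (1 - a / b)]

theorem integral_abs_sum_mul_exp_le {ι : Type*} (s : Finset ι) (d lam : ι → ℝ) {μ t : ℝ}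
    (hlam : ∀ i ∈ s, lam i < 0) (hμ : μ < 0) (ht : 0 ≤ t) :
    ∫ τ in (0:ℝ)..t, |∑ i ∈ s, d i * exp (lam i * τ)| ≤
      |∑ i ∈ s, d i / lam i| + 2 * ∑ i ∈ s, |d i| * |1 / lam i - 1 / μ| := by
  set A := ∑ i ∈ s, d i / lam i
  set E : ι → ℝ → ℝ := fun i τ => lam i * exp (lam i * τ) - μ * exp (μ * τ)
  have hsplit : ∀ τ, ∑ i ∈ s, d i * exp (lam i * τ) =
      A * (μ * exp (μ * τ)) + ∑ i ∈ s, d i / lam i * E i τ := by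
    intro τ
    simp only [E, A, mul_sub, Finset.sum_sub_distrib, Finset.sum_mul, add_sub_cancel]
    refine Finset.sum_congr rfl fun i hi => ?_
    field_simp [(hlam i hi).ne]
  have hE : ∀ i, Continuous (fun τ => |d i / lam i| * |E i τ|) := fun i => by fun_prop
  calc ∫ τ in (0:ℝ)..t, |∑ i ∈ s, d i * exp (lam i * τ)|
      ≤ ∫ τ in (0:ℝ)..t, (|A| * -(μ * exp (μ * τ)) + ∑ i ∈ s, |d i / lam i| * |E i τ|) := by
        refine integral_mono_on ht (Continuous.intervalIntegrable (by fun_prop) _ _)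
          (Continuous.intervalIntegrable (by fun_prop) _ _) fun τ _ => ?_
        rw [hsplit, ← abs_of_neg (mul_neg_of_neg_of_pos hμ (exp_pos (μ * τ))), ← abs_mul]
        refine (abs_add_le _ _).trans (add_le_add le_rfl ?_)
        exact (Finset.abs_sum_le_sum_abs _ _).trans_eq (by simp only [abs_mul])
    _ = |A| * (∫ τ in (0:ℝ)..t, -(μ * exp (μ * τ))) +
          ∑ i ∈ s, |d i / lam i| * ∫ τ in (0:ℝ)..t, |E i τ| := by
        rw [integral_add (Continuous.intervalIntegrable (by fun_prop) _ _)
          (Continuous.intervalIntegrable (by fun_prop) _ _), integral_const_mul,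
          integral_finsetSum fun i _ => (hE i).intervalIntegrable _ _]
        simp only [integral_const_mul]
    _ ≤ |A| * 1 + ∑ i ∈ s, |d i / lam i| * (2 * |1 - lam i / μ|) := by
        gcongr with i hi
        · rw [integral_neg, integral_mul_exp_mul]
          linarith [exp_pos (μ * t)]
        · exact integral_abs_mul_exp_sub_mul_exp_le (hlam i hi) hμ ht
    _ = _ := by
        rw [mul_one, Finset.mul_sum]
        refine congrArg _ (Finset.sum_congr rfl fun i hi => ?_)
        rw [mul_left_comm, ← abs_mul, ← abs_mul]
        congr 2
        field_simp [(hlam i hi).ne]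

theorem natCast_mul_inv_pow_three_le {k k₀ k₁ : ℕ} {m : ℝ} (hk : k ≤ k₀ + k₁) (hm : 0 < m)
    (hmk₀ : m ≤ k₀) : (k : ℝ) * ((k₀ : ℝ) ^ 3)⁻¹ ≤ (1 + k₁) / m ^ 2 := by
  have hk₀ : (1 : ℝ) ≤ k₀ := Nat.one_le_cast.2 (Nat.cast_pos.1 (hm.trans_le hmk₀))
  have hk' : (k : ℝ) ≤ (1 + k₁) * k₀ := by
    have : (k : ℝ) ≤ k₀ + k₁ := by exact_mod_cast hk
    nlinarith [(Nat.cast_nonneg k₁ : (0:ℝ) ≤ k₁)]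
  calc (k : ℝ) * ((k₀ : ℝ) ^ 3)⁻¹ ≤ (1 + k₁) * k₀ * ((k₀ : ℝ) ^ 3)⁻¹ := by gcongr
    _ = (1 + k₁) / (k₀ : ℝ) ^ 2 := by field_simp
    _ ≤ (1 + k₁) / m ^ 2 := by gcongr

theorem stmt_11_general (n s k₁ : ℕ) (hn : 1 ≤ n)
    (c₁ c₂ c₃ c₄ c₅ γ : ℝ)
    (hc₁ : 0 < c₁) (hc₂ : 0 < c₂) (hc₃ : 0 < c₃) (hc₄ : 0 < c₄) (hc₅ : 0 < c₅) (hγ : 0 < γ)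
    (lam b c : ℕ → ℝ)
    (hlam : ∀ k, n ≤ k → lam k ≤ -c₃ * (k : ℝ) ^ 2)
    (hb : ∀ k, n ≤ k → |b k| ≤ c₁ * (k : ℝ))
    (hc : ∀ k, n ≤ k → |c k| ≤ c₂)
    (hgap : ∀ k k', n ≤ k → k ≤ k' → k' ≤ k + k₁ →
      |1 / lam k - 1 / lam k'| ≤ γ * ((k : ℝ) ^ 3)⁻¹)
    (S : ℕ → Finset ℕ)
    (hcard : ∀ j, 1 ≤ j → (S j).card ≤ s)
    (hmin : ∀ j, 1 ≤ j → ∀ k ∈ S j, c₄ * (j : ℝ) ≤ (k : ℝ))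
    (hdiam : ∀ j, 1 ≤ j → ∀ k ∈ S j, ∀ k' ∈ S j, k' ≤ k + k₁)
    (hsum : ∀ j, 1 ≤ j → |∑ k ∈ S j, c k * b k / lam k| ≤ c₅ / (j : ℝ) ^ 2) :
    ∃ C₃ > (0 : ℝ), ∀ t ≥ (0 : ℝ), ∀ j : ℕ, (n : ℝ) ≤ c₄ * (j : ℝ) →
      (∫ τ in (0:ℝ)..t, |∑ k ∈ S j, c k * b k * Real.exp (lam k * τ)|) ≤
        C₃ / (j : ℝ) ^ 2 := by
  refine ⟨c₅ + 2 * s * c₁ * c₂ * γ * (1 + k₁) / c₄ ^ 2, by positivity, fun t ht j hnj => ?_⟩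
  have hn' : (1 : ℝ) ≤ n := by exact_mod_cast hn
  have hcj : 0 < c₄ * j := by linarith
  have hj : 1 ≤ j := Nat.one_le_iff_ne_zero.2 (by rintro rfl; simp at hcj)
  have hnk : ∀ k ∈ S j, n ≤ k := fun k hk => by exact_mod_cast hnj.trans (hmin j hj k hk)
  have hneg : ∀ k ∈ S j, lam k < 0 := fun k hk => by
    have : (1 : ℝ) ≤ k := hn'.trans (by exact_mod_cast hnk k hk)
    nlinarith [hlam k (hnk k hk), mul_pos hc₃ (pow_pos (by linarith : (0 : ℝ) < k) 2)]
  rcases (S j).eq_empty_or_nonempty with hempty | hne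
  · simp only [hempty, Finset.sum_empty, abs_zero, integral_zero]
    positivity
  set k₀ := (S j).min' hne
  have hk₀ : k₀ ∈ S j := (S j).min'_mem hne
  have hterm : ∀ k ∈ S j, |c k * b k| * |1 / lam k - 1 / lam k₀| ≤
      c₁ * c₂ * γ * ((1 + k₁) / (c₄ * j) ^ 2) := fun k hk => by
    calc |c k * b k| * |1 / lam k - 1 / lam k₀| ≤ c₂ * (c₁ * k) * (γ * ((k₀ : ℝ) ^ 3)⁻¹) := by
          rw [abs_mul, abs_sub_comm]
          gcongr
          exacts [hc k (hnk k hk), hb k (hnk k hk),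
            hgap k₀ k (hnk k₀ hk₀) ((S j).min'_le k hk) (hdiam j hj k₀ hk₀ k hk)]
      _ = c₁ * c₂ * γ * (k * ((k₀ : ℝ) ^ 3)⁻¹) := by ring
      _ ≤ _ := by
          gcongr
          exact natCast_mul_inv_pow_three_le (hdiam j hj k₀ hk₀ k hk) hcj (hmin j hj k₀ hk₀)
  calc ∫ τ in (0:ℝ)..t, |∑ k ∈ S j, c k * b k * Real.exp (lam k * τ)|
      ≤ |∑ k ∈ S j, c k * b k / lam k| + 2 * ∑ k ∈ S j, |c k * b k| * |1 / lam k - 1 / lam k₀| :=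
        integral_abs_sum_mul_exp_le (S j) (fun k => c k * b k) lam hneg (hneg k₀ hk₀) ht
    _ ≤ c₅ / j ^ 2 + 2 * (s * (c₁ * c₂ * γ * ((1 + k₁) / (c₄ * j) ^ 2))) := by
        gcongr
        · exact hsum j hj
        · refine (Finset.sum_le_card_nsmul _ _ _ hterm).trans ?_
          rw [nsmul_eq_mul]
          gcongr
          exact_mod_cast hcard j hj
    _ = _ := by field_simp

/-- Lemma 4.3 of the paper: the auxiliary integral estimate under Assumption (A2b).
Grouping the modes into small clusters `S_j` whose weighted sums almost cancel
yields an integrable kernel with gain of order `j^{-2}`. -/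
theorem stmt_11 (n s k₁ : ℕ) (hn : 1 ≤ n) (hs : 1 ≤ s) (hk₁ : 1 ≤ k₁)
    (c₁ c₂ c₃ c₄ c₅ γ : ℝ)
    (hc₁ : 0 < c₁) (hc₂ : 0 < c₂) (hc₃ : 0 < c₃) (hc₄ : 0 < c₄) (hc₅ : 0 < c₅) (hγ : 0 < γ)
    (lam b c : ℕ → ℝ)
    (hlam : ∀ k, n ≤ k → lam k ≤ -c₃ * (k : ℝ) ^ 2)
    (hb : ∀ k, n ≤ k → |b k| ≤ c₁ * (k : ℝ))
    (hc : ∀ k, n ≤ k → |c k| ≤ c₂)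
    (hdist : ∀ k k', n ≤ k → n ≤ k' → k ≠ k' → lam k ≠ lam k')
    (hgap : ∀ k k', n ≤ k → k ≤ k' → k' ≤ k + k₁ →
      |1 / lam k - 1 / lam k'| ≤ γ * ((k : ℝ) ^ 3)⁻¹)
    (S : ℕ → Finset ℕ)
    (hcard : ∀ j, 1 ≤ j → (S j).card ≤ s)
    (hmin : ∀ j, 1 ≤ j → ∀ k ∈ S j, c₄ * (j : ℝ) ≤ (k : ℝ))
    (hdiam : ∀ j, 1 ≤ j → ∀ k ∈ S j, ∀ k' ∈ S j, k' ≤ k + k₁)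
    (hsum : ∀ j, 1 ≤ j → |∑ k ∈ S j, c k * b k / lam k| ≤ c₅ / (j : ℝ) ^ 2) :
    ∃ C₃ > (0 : ℝ), ∀ t ≥ (0 : ℝ), ∀ j : ℕ, (n : ℝ) ≤ c₄ * (j : ℝ) →
      (∫ τ in (0:ℝ)..t, |∑ k ∈ S j, c k * b k * Real.exp (lam k * τ)|) ≤
        C₃ / (j : ℝ) ^ 2 :=
  stmt_11_general n s k₁ hn c₁ c₂ c₃ c₄ c₅ γ hc₁ hc₂ hc₃ hc₄ hc₅ hγ lam b c hlam hb hc hgap S hcard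
    hmin hdiam hsum
end

section
/- Let C > 0 and set q = 1/(4(C+1)). Let a, b : ℕ → [0,∞) be sequences satisfying a_{k+1} ≤ q a_k + (C+1) b_k and b_{k+1} ≤ q b_k + q a_k for all k ∈ ℕ. Then for all k ≥ 1: a_k ≤ 2 (3/4)^k ( a_0 + (C+1) b_0 ) and b_k ≤ 2 (3/4)^k ( a_0 + b_0 ). -/
/-!
The weighted sum `a k + 2 (C + 1) b k` is a Lyapunov function: the choice `q = 1/(4(C+1))` makes
it contract by the factor `3/4` at every step. Each of `a k` and `2 (C + 1) b k` is bounded by it,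
which gives both estimates.
-/

theorem coupled_step_lyapunov_le {C q a b a' b' : ℝ} (hC : 0 ≤ C) (hq₀ : 0 ≤ q)
    (hq : q ≤ 1 / (4 * (C + 1))) (ha : 0 ≤ a) (hb : 0 ≤ b)
    (ha' : a' ≤ q * a + (C + 1) * b) (hb' : b' ≤ q * b + q * a) :
    a' + 2 * (C + 1) * b' ≤ 3 / 4 * (a + 2 * (C + 1) * b) := by
  have hq4 : 4 * (C + 1) * q ≤ 1 := by
    rwa [le_div_iff₀ (by positivity), mul_comm] at hq
  have hcoef_a : q * (2 * C + 3) ≤ 3 / 4 := by nlinarith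
  have hcoef_b : (C + 1) * (1 + 2 * q) ≤ 3 / 4 * (2 * (C + 1)) := by nlinarith
  nlinarith [mul_le_mul_of_nonneg_right hcoef_a ha, mul_le_mul_of_nonneg_right hcoef_b hb]

theorem coupled_lyapunov_le_geom {C q : ℝ} {a b : ℕ → ℝ} (hC : 0 ≤ C) (hq₀ : 0 ≤ q)
    (hq : q ≤ 1 / (4 * (C + 1))) (ha : ∀ k, 0 ≤ a k) (hb : ∀ k, 0 ≤ b k)
    (hrec_a : ∀ k, a (k + 1) ≤ q * a k + (C + 1) * b k)
    (hrec_b : ∀ k, b (k + 1) ≤ q * b k + q * a k) (k : ℕ) :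
    a k + 2 * (C + 1) * b k ≤ (3 / 4 : ℝ) ^ k * (a 0 + 2 * (C + 1) * b 0) :=
  le_geom (u := fun k ↦ a k + 2 * (C + 1) * b k) (by norm_num) k fun j _ ↦
    coupled_step_lyapunov_le hC hq₀ hq (ha j) (hb j) (hrec_a j) (hrec_b j)

/-- The coupled difference-inequality estimate from the proof of Theorem 5.1:
with `q = 1/(4(C+1))`, the recursions `a_{k+1} ≤ q a_k + (C+1) b_k` and
`b_{k+1} ≤ q b_k + q a_k` decay geometrically with ratio `3/4`. -/
theorem stmt_15 (C : ℝ) (hC : 0 < C) (q : ℝ) (hq : q = 1 / (4 * (C + 1)))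
    (a b : ℕ → ℝ) (ha : ∀ k, 0 ≤ a k) (hb : ∀ k, 0 ≤ b k)
    (hrec_a : ∀ k, a (k + 1) ≤ q * a k + (C + 1) * b k)
    (hrec_b : ∀ k, b (k + 1) ≤ q * b k + q * a k) :
    ∀ k, 1 ≤ k →
      a k ≤ 2 * (3 / 4 : ℝ) ^ k * (a 0 + (C + 1) * b 0) ∧
      b k ≤ 2 * (3 / 4 : ℝ) ^ k * (a 0 + b 0) := by
  intro k _
  have hq₀ : 0 ≤ q := by rw [hq]; positivity
  have hM := coupled_lyapunov_le_geom hC.le hq₀ hq.le ha hb hrec_a hrec_b k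
  have hρ : (0 : ℝ) ≤ (3 / 4) ^ k := by positivity
  have ha₀ := ha 0
  have hb₀ := hb 0
  have hak := ha k
  have hbk := hb k
  constructor
  · nlinarith [mul_nonneg hρ ha₀, mul_nonneg (mul_nonneg hρ hb₀) hC.le]
  · have hM₀ : a 0 + 2 * (C + 1) * b 0 ≤ 2 * (C + 1) * (a 0 + b 0) := by nlinarith
    have hbk' : 2 * (C + 1) * b k ≤ 2 * (C + 1) * ((3 / 4) ^ k * (a 0 + b 0)) := by
      nlinarith [mul_le_mul_of_nonneg_left hM₀ hρ]
    have := le_of_mul_le_mul_left hbk' (by positivity)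
    nlinarith [mul_nonneg hρ (add_nonneg ha₀ hb₀)]
end

section
/- Let r₁₂, r₂₁ > 0 and for k ≥ 1 set μ_k = (2k−1)π/2 and δ_k = r₁₂ r₂₁ / μ_k⁴. Define the ℝ²-valued functions on [0,1]: φ¹_k(z) = (√2 / √(1+δ_k)) · (1, r₂₁/μ_k²) · cos(μ_k z), φ²_k(z) = (√2 / √(1+δ_k)) · (−r₁₂/μ_k², 1) · sin(μ_k z), e¹_k(z) = √2 (cos(μ_k z), 0), and e²_k(z) = √2 (0, sin(μ_k z)). Then the series Σ_{k=1}^∞ ( ∫₀¹ ‖φ¹_k(z) − e¹_k(z)‖₂² dz + ∫₀¹ ‖φ²_k(z) − e²_k(z)‖₂² dz ) converges. -/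
open Real

/-- `μ_k = (2k-1)π/2` from the Appendix of the paper. -/
noncomputable def muApp (k : ℕ) : ℝ := (2 * (k : ℝ) - 1) * Real.pi / 2

/-- `δ_k = r₁₂ r₂₁ / μ_k⁴` from the Appendix of the paper. -/
noncomputable def deltaApp (r₁₂ r₂₁ : ℝ) (k : ℕ) : ℝ := r₁₂ * r₂₁ / muApp k ^ 4

/-!
Write `c_k = √2 / √(1 + δ_k)`. Both integrands are of the form `(p cos)² + (q cos)²` or
`(p sin)² + (q sin)²`, so the `k`-th term is at most `2 (c_k - √2)² + c_k² (r₁₂² + r₂₁²) / μ_k⁴`.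
Since `c_k² ≤ 2` and `(c_k - √2)² ≤ 2 δ_k`, the term is `O(μ_k⁻⁴)`, and `μ_k ≥ k`.
-/

lemma norm_integral_le_of_eq_sq_mul_add_sq_mul {f g : ℝ → ℝ} (p q : ℝ) (hg : ∀ z, |g z| ≤ 1)
    (hf : ∀ z, f z = (p * g z) ^ 2 + (q * g z) ^ 2) :
    ‖∫ z in (0:ℝ)..1, f z‖ ≤ p ^ 2 + q ^ 2 := by
  have hbound : ∀ z, ‖f z‖ ≤ p ^ 2 + q ^ 2 := fun z => by
    have hg2 : g z ^ 2 ≤ 1 := by simpa using pow_le_one₀ (abs_nonneg _) (hg z) (n := 2)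
    rw [hf, Real.norm_of_nonneg (by positivity)]
    nlinarith [mul_nonneg (add_nonneg (sq_nonneg p) (sq_nonneg q)) (sub_nonneg.2 hg2)]
  simpa using intervalIntegral.norm_integral_le_of_norm_le_const (a := 0) (b := 1)
    fun z _ => hbound z

lemma norm_integral_cos_add_integral_sin_le (c e a b μ : ℝ) :
    ‖(∫ z in (0:ℝ)..1,
        ((c * 1 * cos (μ * z) - e * cos (μ * z)) ^ 2 + (c * b * cos (μ * z) - 0) ^ 2)) +
      (∫ z in (0:ℝ)..1,
        ((c * (-a) * sin (μ * z) - 0) ^ 2 + (c * 1 * sin (μ * z) - e * sin (μ * z)) ^ 2))‖ ≤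
      2 * (c - e) ^ 2 + c ^ 2 * (a ^ 2 + b ^ 2) :=
  calc _ ≤ ((c - e) ^ 2 + (c * b) ^ 2) + ((c * a) ^ 2 + (c - e) ^ 2) :=
        (norm_add_le _ _).trans <| add_le_add
          (norm_integral_le_of_eq_sq_mul_add_sq_mul _ _ (fun z => abs_cos_le_one (μ * z))
            fun z => by ring)
          (norm_integral_le_of_eq_sq_mul_add_sq_mul _ _ (fun z => abs_sin_le_one (μ * z))
            fun z => by ring)
    _ = _ := by ring

lemma sq_sqrt_two_div_sqrt_one_add_le {δ : ℝ} (hδ : 0 ≤ δ) : (√2 / √(1 + δ)) ^ 2 ≤ 2 := by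
  rw [div_pow, sq_sqrt zero_le_two, sq_sqrt (by linarith)]
  exact div_le_self zero_le_two (by linarith)

lemma sq_sqrt_two_div_sqrt_one_add_sub_le {δ : ℝ} (hδ : 0 ≤ δ) :
    (√2 / √(1 + δ) - √2) ^ 2 ≤ 2 * δ := by
  set s := √(1 + δ)
  have hs2 : s ^ 2 = 1 + δ := sq_sqrt (by linarith)
  have hs1 : 1 ≤ s := one_le_sqrt.2 (by linarith)
  have hinv : 0 ≤ 1 - s⁻¹ ∧ 1 - s⁻¹ ≤ 1 :=
    ⟨sub_nonneg.2 (inv_le_one_of_one_le₀ hs1), by linarith [inv_nonneg.2 (zero_le_one.trans hs1)]⟩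
  have hsub : 1 - s⁻¹ ≤ s - 1 := by
    have : s⁻¹ * s = 1 := inv_mul_cancel₀ (by linarith)
    nlinarith
  -- `(1 - 1/s)² ≤ 1 - 1/s ≤ s - 1 ≤ s² - 1 = δ`
  calc (√2 / s - √2) ^ 2 = 2 * (1 - s⁻¹) ^ 2 := by
        rw [div_eq_mul_inv]; linear_combination (1 - s⁻¹) ^ 2 * sq_sqrt zero_le_two
    _ ≤ 2 * δ := by nlinarith

lemma natCast_add_one_le_muApp (i : ℕ) : (i : ℝ) + 1 ≤ muApp (i + 1) := by
  rw [muApp]; push_cast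
  nlinarith [pi_gt_three, (i.cast_nonneg : (0 : ℝ) ≤ i)]

lemma muApp_succ_pos (i : ℕ) : 0 < muApp (i + 1) :=
  (Nat.cast_add_one_pos i).trans_le (natCast_add_one_le_muApp i)

lemma summable_one_div_muApp_pow {p : ℕ} (hp : 1 < p) :
    Summable fun i : ℕ => 1 / muApp (i + 1) ^ p := by
  have hnat : Summable fun i : ℕ => 1 / ((i : ℝ) + 1) ^ p := by
    simpa using (summable_nat_add_iff 1).2 (summable_one_div_nat_pow.2 hp)
  exact hnat.of_nonneg_of_le (fun i => one_div_nonneg.2 (pow_nonneg (muApp_succ_pos i).le p))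
    fun i => one_div_le_one_div_of_le (by positivity)
      (pow_le_pow_left₀ (by positivity) (natCast_add_one_le_muApp i) p)

/-- Quadratic-closeness estimate (Bari's criterion) from the Appendix for the
coupled diffusion-reaction system: the series over `k ≥ 1` (written `k = i+1`,
`i : ℕ`) of `∫₀¹ ‖φ¹_k - e¹_k‖₂² + ∫₀¹ ‖φ²_k - e²_k‖₂²` converges, where the
squared Euclidean norms of the ℝ²-valued integrands are written out
componentwise:
`φ¹_k(z) = (√2/√(1+δ_k)) (1, r₂₁/μ_k²) cos(μ_k z)`,
`φ²_k(z) = (√2/√(1+δ_k)) (-r₁₂/μ_k², 1) sin(μ_k z)`,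
`e¹_k(z) = √2 (cos(μ_k z), 0)`, `e²_k(z) = √2 (0, sin(μ_k z))`. -/
theorem stmt_19 (r₁₂ r₂₁ : ℝ) (h₁₂ : 0 < r₁₂) (h₂₁ : 0 < r₂₁) :
    Summable fun i : ℕ =>
      (∫ z in (0:ℝ)..1,
        ((Real.sqrt 2 / Real.sqrt (1 + deltaApp r₁₂ r₂₁ (i + 1)) * 1 *
            Real.cos (muApp (i + 1) * z) -
          Real.sqrt 2 * Real.cos (muApp (i + 1) * z)) ^ 2 +
         (Real.sqrt 2 / Real.sqrt (1 + deltaApp r₁₂ r₂₁ (i + 1)) * (r₂₁ / muApp (i + 1) ^ 2) *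
            Real.cos (muApp (i + 1) * z) - 0) ^ 2)) +
      (∫ z in (0:ℝ)..1,
        ((Real.sqrt 2 / Real.sqrt (1 + deltaApp r₁₂ r₂₁ (i + 1)) * (-(r₁₂ / muApp (i + 1) ^ 2)) *
            Real.sin (muApp (i + 1) * z) - 0) ^ 2 +
         (Real.sqrt 2 / Real.sqrt (1 + deltaApp r₁₂ r₂₁ (i + 1)) * 1 *
            Real.sin (muApp (i + 1) * z) -
          Real.sqrt 2 * Real.sin (muApp (i + 1) * z)) ^ 2)) := by
  refine ((summable_one_div_muApp_pow (p := 4) (by norm_num)).mul_left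
    (4 * (r₁₂ * r₂₁) + 2 * (r₁₂ ^ 2 + r₂₁ ^ 2))).of_norm_bounded fun i => ?_
  have hμ := muApp_succ_pos i
  have hδ : 0 ≤ deltaApp r₁₂ r₂₁ (i + 1) := by rw [deltaApp]; positivity
  refine (norm_integral_cos_add_integral_sin_le _ _ _ _ _).trans ?_
  calc _ ≤ 2 * (2 * deltaApp r₁₂ r₂₁ (i + 1)) +
        2 * ((r₁₂ / muApp (i + 1) ^ 2) ^ 2 + (r₂₁ / muApp (i + 1) ^ 2) ^ 2) := by
        gcongr
        · exact sq_sqrt_two_div_sqrt_one_add_sub_le hδ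
        · exact sq_sqrt_two_div_sqrt_one_add_le hδ
    _ = _ := by rw [deltaApp]; field_simp; ring
end
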